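/- arXiv:2306.04623 — 2 statements merged into one kernel-verified Lean document; each statement's English description precedes it below -/
import Mathlib

section
/- Let (G_i,u_i), i ∈ I, be a family of linearly ordered lattice-ordered groups with strong units; put u = (u_i)_{i∈I} and G = {g ∈ ∏_{i∈I} G_i : ∃ n ∈ ℕ, −n·u ≤ g ≤ n·u}, so that M = Γ(G,u) is the direct product of the linearly ordered pseudo MV-algebras Γ(G_i,u_i). Then the following are equivalent: (i) M has a strict square root; (ii) M is two-divisible (for every y ∈ M there is x ∈ M with x + x = y) and there is h ∈ C(G) with h + h = u; (iii) G is two-divisible and there is h ∈ C(G) with h + h = u. In either case the map r(x) = (x+u)/2 (the element h with h + h = x + u) is defined for each x ∈ M and is a strict square root on M. -/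
section Core

variable {G : Type} [Lattice G] [AddGroup G]

/-- `u` is a strong unit of the ℓ-group `G`. -/
def IsStrongUnit (u : G) : Prop :=
  0 ≤ u ∧ ∀ g : G, ∃ n : ℕ, 1 ≤ n ∧ g ≤ n • u

/-- Truncated addition `x ⊕ y = (x + y) ⊓ u` of the pseudo MV-algebra `Γ(G,u)`. -/
def oplus (u x y : G) : G := (x + y) ⊓ u

/-- Left negation `x⁻ = u - x`. -/
def negl (u x : G) : G := u - x

/-- Right negation `x~ = -x + u`. -/
def negr (u x : G) : G := -x + u

/-- `x ⊙ y = (x - u + y) ⊔ 0`. -/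
def odot (u x y : G) : G := (x - u + y) ⊔ 0

/-- `r` is a square root on the pseudo MV-algebra `M = Γ(G,u)`:
it maps `M` to `M` and satisfies (Sq1), (Sq2), (Sq3). -/
def IsSquareRoot (u : G) (r : G → G) : Prop :=
  (∀ x, 0 ≤ x → x ≤ u → 0 ≤ r x ∧ r x ≤ u) ∧
  (∀ x, 0 ≤ x → x ≤ u → odot u (r x) (r x) = x) ∧
  (∀ x y, 0 ≤ x → x ≤ u → 0 ≤ y → y ≤ u → odot u y y ≤ x → y ≤ r x) ∧
  (∀ x, 0 ≤ x → x ≤ u → r (negl u x) = oplus u (negl u (r x)) (r 0)) ∧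
  (∀ x, 0 ≤ x → x ≤ u → r (negr u x) = oplus u (r 0) (negr u (r x)))

/-- `r` is strict: `r 0 = r 0⁻`. -/
def IsStrict (u : G) (r : G → G) : Prop := r 0 = negl u (r 0)

end Core

/-- An additive structure is two-divisible if every element is `h + h` for some `h`. -/
def TwoDivisible (A : Type) [Add A] : Prop := ∀ g : A, ∃ h : A, h + h = g

/-- Membership in `G = {g ∈ ∏ K i : ∃ n, -n•v ≤ g ≤ n•v}`. -/
def BoundedElt {ι : Type} {K : ι → Type} [∀ i, AddGroup (K i)] [∀ i, LinearOrder (K i)]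
    (v : ∀ i, K i) (g : ∀ i, K i) : Prop :=
  ∃ n : ℕ, ∀ i, -(n • v i) ≤ g i ∧ g i ≤ n • v i

/-!
A strict square root forces `h = r 0` to satisfy `h + h = u`, and the truncation in `r x ⊙ r x = x`
is never active because `h ≤ r x`; so `r x - u + r x = x`. Feeding the same identity for `x~`
through (Sq3) yields `h - r x + h - r x = -x`, and comparing the two identities shows that `h`
commutes with `r x`, hence with `x`. Thus `h` is central on `[0,u]`, and `r y - h` halves `y`.
In each linearly ordered factor, a strong unit lets both centrality and divisibility propagate
from `[0,u]` to the whole group by translations by `±u`. Conversely, with halves unique in a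
linearly ordered group and `u/2` central, `x ↦ (x + u)/2` is checked to be a strict square root
factor by factor.
-/


theorem addCommute_of_sub_add_eq {G : Type*} [AddGroup G] {a b c : G}
    (h₁ : b - (c + c) + b = a) (h₂ : c - b + c - b = -a) : AddCommute c b := by
  have h₃ : b - c + (b - c) = b - c + (-c + b) := by
    have := h₁.trans (neg_eq_iff_eq_neg.1 h₂.symm)
    simpa [sub_eq_add_neg, neg_add_rev, add_assoc] using this.symm
  have : AddCommute (-c) b := (add_left_cancel h₃).symm.trans (sub_eq_add_neg b c)
  simpa using this.neg_left

theorem isStrict_iff {G : Type} [Lattice G] [AddGroup G] {u : G} {r : G → G} :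
    IsStrict u r ↔ r 0 + r 0 = u :=
  eq_sub_iff_add_eq

namespace IsSquareRoot

variable {G : Type} [Lattice G] [AddGroup G] {u : G} {r : G → G}

theorem apply_zero_le (hr : IsSquareRoot u r) {x : G} (hx₀ : 0 ≤ x) (hxu : x ≤ u) :
    r 0 ≤ r x := by
  have hu : 0 ≤ u := hx₀.trans hxu
  obtain ⟨hr₀, hr₁⟩ := hr.1 0 le_rfl hu
  exact hr.2.2.1 x (r 0) hx₀ hxu hr₀ hr₁ (by rw [hr.2.1 0 le_rfl hu]; exact hx₀)

variable [AddLeftMono G] [AddRightMono G]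

theorem sub_add_self (hr : IsSquareRoot u r) (hs : IsStrict u r) {x : G} (hx₀ : 0 ≤ x)
    (hxu : x ≤ u) : r x - u + r x = x := by
  have hle := hr.apply_zero_le hx₀ hxu
  have hnonneg : 0 ≤ r x - u + r x :=
    calc (0 : G) = r 0 - u + r 0 := by
          rw [← isStrict_iff.1 hs]; simp [sub_eq_add_neg]
      _ ≤ r x - u + r x := add_le_add (sub_le_sub_right hle u) hle
  have := hr.2.1 x hx₀ hxu
  rwa [odot, sup_eq_left.2 hnonneg] at this

theorem addCommute_apply_zero (hr : IsSquareRoot u r) (hs : IsStrict u r) {x : G}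
    (hx₀ : 0 ≤ x) (hxu : x ≤ u) : AddCommute (r 0) x := by
  set h := r 0
  set b := r x
  have hhu : h + h = u := isStrict_iff.1 hs
  have hx'₀ : 0 ≤ negr u x := le_neg_add_iff_add_le.2 (by simpa using hxu)
  have hx'u : negr u x ≤ u := add_le_of_nonpos_left (neg_nonpos.2 hx₀)
  have hr' : r (negr u x) = h + (-b + u) := by
    have hle : h + (-b + u) ≤ u := by
      rw [← add_assoc]
      exact add_le_of_nonpos_left (add_neg_nonpos_iff_le.2 (hr.apply_zero_le hx₀ hxu))
    rw [hr.2.2.2.2 x hx₀ hxu]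
    exact inf_eq_left.2 hle
  have h₁ : b - (h + h) + b = x := hhu ▸ hr.sub_add_self hs hx₀ hxu
  have h₂ : h - b + h - b = -x := by
    have := hr.sub_add_self hs hx'₀ hx'u
    rw [hr'] at this
    apply add_right_cancel (b := u)
    simpa [negr, sub_eq_add_neg, add_assoc] using this
  have hb := addCommute_of_sub_add_eq h₁ h₂
  have hh : AddCommute h (-(h + h)) := ((AddCommute.refl h).add_right (AddCommute.refl h)).neg_right
  rw [← h₁, sub_eq_add_neg]
  exact (hb.add_right hh).add_right hb

theorem exists_half (hr : IsSquareRoot u r) (hs : IsStrict u r) :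
    ∀ y, 0 ≤ y → y ≤ u → ∃ x, 0 ≤ x ∧ x ≤ u ∧ x + x = y := by
  intro y hy₀ hyu
  have hu : 0 ≤ u := hy₀.trans hyu
  have hry := hr.1 y hy₀ hyu
  have hc : AddCommute (r 0) (r y) := hr.addCommute_apply_zero hs hry.1 hry.2
  refine ⟨r y - r 0, sub_nonneg.2 (hr.apply_zero_le hy₀ hyu), ?_, ?_⟩
  · calc r y - r 0 ≤ u - r 0 := sub_le_sub_right hry.2 _
      _ = r 0 := hs.symm
      _ ≤ u := (hr.1 0 le_rfl hu).2
  · calc r y - r 0 + (r y - r 0) = r y - r 0 + (-r 0 + r y) := by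
          rw [sub_eq_add_neg (r y), hc.neg_left.eq]
      _ = r y - (r 0 + r 0) + r y := by simp [sub_eq_add_neg, neg_add_rev, add_assoc]
      _ = y := by rw [isStrict_iff.1 hs]; exact hr.sub_add_self hs hy₀ hyu

end IsSquareRoot

section LinearOrder

variable {L : Type} [AddGroup L] [LinearOrder L] [AddLeftMono L] [AddRightMono L]

theorem add_self_strictMono : StrictMono fun a : L => a + a :=
  fun _ _ h => add_lt_add h h

theorem add_self_le_add_self_iff {a b : L} : a + a ≤ b + b ↔ a ≤ b :=
  add_self_strictMono.le_iff_le

theorem add_self_injective : Function.Injective fun a : L => a + a :=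
  add_self_strictMono.injective

theorem add_self_nonneg_iff {a : L} : 0 ≤ a + a ↔ 0 ≤ a := by
  simpa using add_self_le_add_self_iff (a := (0 : L)) (b := a)

theorem le_of_add_self_le {a w : L} (hw : 0 ≤ w) (h : a + a ≤ w) : a ≤ w :=
  add_self_le_add_self_iff.1 (h.trans (le_add_of_nonneg_left hw))

namespace IsStrongUnit

variable {w : L}

theorem forall_of_forall_Icc (hw : IsStrongUnit w) {P : L → Prop}
    (hIcc : ∀ a, 0 ≤ a → a ≤ w → P a) (hadd : ∀ a, P a → P (w + a))
    (hsub : ∀ a, P a → P (-w + a)) (a : L) : P a := by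
  have hnsmul : ∀ n : ℕ, ∀ a, 0 ≤ a → a ≤ n • w → P a := by
    intro n
    induction n with
    | zero =>
      intro a ha₀ ha
      rw [le_antisymm (by simpa using ha) ha₀]
      exact hIcc 0 le_rfl hw.1
    | succ n ih =>
      intro a ha₀ ha
      rcases le_total a w with haw | hwa
      · exact hIcc a ha₀ haw
      · have := hadd _ (ih (-w + a) (le_neg_add_iff_add_le.2 (by simpa using hwa))
          (neg_add_le_iff_le_add.2 (by rwa [← succ_nsmul'])))
        rwa [add_neg_cancel_left] at this
  have hneg : ∀ n : ℕ, ∀ a, P a → P (-(n • w) + a) := by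
    intro n
    induction n with
    | zero => simp
    | succ n ih =>
      intro a ha
      rw [succ_nsmul, neg_add_rev, add_assoc]
      exact hsub _ (ih a ha)
  obtain ⟨m, -, hm⟩ := hw.2 (-a)
  obtain ⟨n, -, hn⟩ := hw.2 a
  have := hneg m _ (hnsmul (m + n) (m • w + a) (neg_le_iff_add_nonneg.1 hm)
    (by rw [add_nsmul]; exact add_le_add_right hn _))
  rwa [neg_add_cancel_left] at this

theorem addCommute_of_forall_Icc (hw : IsStrongUnit w) {c : L}
    (hc : ∀ a, 0 ≤ a → a ≤ w → AddCommute c a) (a : L) : AddCommute c a :=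
  have hcw := hc w hw.1 le_rfl
  hw.forall_of_forall_Icc hc (fun _ ha => hcw.add_right ha)
    (fun _ ha => hcw.neg_right.add_right ha) a

theorem twoDivisible (hw : IsStrongUnit w) {c : L} (hc : ∀ a, AddCommute c a) (hcw : c + c = w)
    (hdiv : ∀ a, 0 ≤ a → a ≤ w → ∃ b, b + b = a) : TwoDivisible L := by
  refine hw.forall_of_forall_Icc hdiv ?_ ?_
  · rintro a ⟨b, rfl⟩
    exact ⟨c + b, by rw [(hc b).symm.add_add_add_comm, hcw]⟩
  · rintro a ⟨b, rfl⟩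
    exact ⟨-c + b, by rw [(hc b).neg_left.symm.add_add_add_comm, ← neg_add_rev, hcw]⟩

end IsStrongUnit

section SquareRoot

variable {c w : L} {s : L → L}

theorem isSquareRoot_of_add_self_eq (hc : ∀ a, AddCommute c a) (hcw : c + c = w)
    (hs : ∀ a, s a + s a = a + w) : IsSquareRoot w s := by
  have hw : ∀ a, AddCommute w a := fun a => hcw ▸ (hc a).add_left (hc a)
  have hsplit : ∀ a, a - w + a + w = a + a := fun a => by
    rw [sub_eq_add_neg, add_assoc, add_assoc, ← (hw a).eq, neg_add_cancel_left]
  have hsub : ∀ a, s a - w + s a = a := fun a =>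
    add_right_cancel ((hsplit (s a)).trans (hs a))
  have hs₀ : s 0 = c := add_self_injective (by simp only [hs, zero_add, hcw])
  have hc_le : ∀ x, 0 ≤ x → c ≤ s x := fun x hx₀ =>
    add_self_le_add_self_iff.1 (by rw [hs, hcw]; exact le_add_of_nonneg_left hx₀)
  have hneg : ∀ x, 0 ≤ x → s (w - x) = w + (-s x + c) := fun x _ => by
    apply add_self_injective
    beta_reduce
    rw [hs, (hw _).symm.add_add_add_comm, (hc _).add_add_add_comm, ← neg_add_rev, hs, hcw]
    simp [sub_eq_add_neg, neg_add_rev, add_assoc]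
  have hneg_le : ∀ x, 0 ≤ x → w + (-s x + c) ≤ w := fun x hx₀ =>
    add_le_of_nonpos_right (neg_add_nonpos_iff.2 (hc_le x hx₀))
  refine ⟨fun x hx₀ hxw => ⟨?_, ?_⟩, fun x hx₀ _ => ?_, fun x y _ _ _ _ hyx => ?_,
    fun x hx₀ _ => ?_, fun x hx₀ _ => ?_⟩
  · exact add_self_nonneg_iff.1 (hs x ▸ add_nonneg hx₀ (hx₀.trans hxw))
  · exact add_self_le_add_self_iff.1 (hs x ▸ add_le_add_left hxw w)
  · rw [odot, hsub, sup_eq_left.2 hx₀]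
  · refine add_self_le_add_self_iff.1 ?_
    rw [hs, ← hsplit]
    exact add_le_add_left (le_sup_left.trans hyx) w
  · show s (w - x) = (w - s x + s 0) ⊓ w
    rw [hneg x hx₀, hs₀, sub_eq_add_neg, add_assoc, inf_eq_left.2 (hneg_le x hx₀)]
  · show s (-x + w) = (s 0 + (-s x + w)) ⊓ w
    have hrhs : s 0 + (-s x + w) = w + (-s x + c) := by
      rw [hs₀, ← (hw _).eq, ← add_assoc, (hc w).eq, add_assoc, (hc _).eq]
    rw [← (hw x).neg_right.eq, ← sub_eq_add_neg, hneg x hx₀, hrhs, inf_eq_left.2 (hneg_le x hx₀)]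

end SquareRoot

end LinearOrder

section Pi

variable {ι : Type} {K : ι → Type}

theorem IsSquareRoot.pi [∀ i, Lattice (K i)] [∀ i, AddGroup (K i)] {v : ∀ i, K i}
    {r : ∀ i, K i → K i} (hr : ∀ i, IsSquareRoot (v i) (r i)) :
    IsSquareRoot v fun x i => r i (x i) :=
  ⟨fun _ hx₀ hxv => ⟨fun i => ((hr i).1 _ (hx₀ i) (hxv i)).1,
      fun i => ((hr i).1 _ (hx₀ i) (hxv i)).2⟩,
    fun _ hx₀ hxv => funext fun i => (hr i).2.1 _ (hx₀ i) (hxv i),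
    fun _ _ hx₀ hxv hy₀ hyv hyx i => (hr i).2.2.1 _ _ (hx₀ i) (hxv i) (hy₀ i) (hyv i) (hyx i),
    fun _ hx₀ hxv => funext fun i => (hr i).2.2.2.1 _ (hx₀ i) (hxv i),
    fun _ hx₀ hxv => funext fun i => (hr i).2.2.2.2 _ (hx₀ i) (hxv i)⟩

variable [∀ i, AddGroup (K i)] [∀ i, LinearOrder (K i)] {v : ∀ i, K i}

theorem single_mem_Icc [DecidableEq ι] (hv₀ : 0 ≤ v) {i : ι} {a : K i}
    (ha₀ : 0 ≤ a) (hav : a ≤ v i) : 0 ≤ Pi.single i a ∧ Pi.single i a ≤ v := by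
  refine ⟨Pi.single_nonneg.2 ha₀, fun j => ?_⟩
  rcases eq_or_ne j i with rfl | hji
  · simpa using hav
  · simpa [Pi.single_eq_of_ne hji] using hv₀ j

variable [∀ i, AddLeftMono (K i)]

theorem boundedElt_of_mem_Icc {g : ∀ i, K i} (hg₀ : 0 ≤ g) (hgv : g ≤ v) : BoundedElt v g :=
  ⟨1, fun i => ⟨by simpa using (neg_nonpos.2 (hg₀.trans hgv i)).trans (hg₀ i),
    by simpa using hgv i⟩⟩

variable [∀ i, AddRightMono (K i)]

theorem boundedElt_single [DecidableEq ι] (hv : ∀ i, IsStrongUnit (v i)) (i : ι) (a : K i) :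
    BoundedElt v (Pi.single i a) := by
  obtain ⟨n, -, hn⟩ := (hv i).2 |a|
  refine ⟨n, fun j => ?_⟩
  rcases eq_or_ne j i with rfl | hji
  · rw [Pi.single_eq_same]
    exact ⟨neg_le.1 ((neg_le_abs a).trans hn), (le_abs_self a).trans hn⟩
  · rw [Pi.single_eq_of_ne hji]
    exact ⟨neg_nonpos.2 (nsmul_nonneg (hv j).1 n), nsmul_nonneg (hv j).1 n⟩

theorem addCommute_apply_of_boundedElt (hv : ∀ i, IsStrongUnit (v i)) {h : ∀ i, K i}
    (hc : ∀ g, BoundedElt v g → h + g = g + h) (i : ι) (a : K i) : AddCommute (h i) a := by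
  classical
  simpa [AddCommute, AddSemiconjBy] using congrFun (hc _ (boundedElt_single hv i a)) i

instance : AddLeftMono (∀ i, K i) := ⟨fun a _ _ h i => add_le_add_right (h i) (a i)⟩

instance : AddRightMono (∀ i, K i) := ⟨fun a _ _ h i => add_le_add_left (h i) (a i)⟩

theorem exists_central_half_of_isSquareRoot (hv : ∀ i, IsStrongUnit (v i))
    {r : (∀ i, K i) → ∀ i, K i} (hr : IsSquareRoot v r) (hs : IsStrict v r) :
    ∃ h, BoundedElt v h ∧ (∀ g, BoundedElt v g → h + g = g + h) ∧ h + h = v := by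
  classical
  have hv₀ : 0 ≤ v := fun i => (hv i).1
  have hc : ∀ i (a : K i), AddCommute (r 0 i) a := fun i =>
    (hv i).addCommute_of_forall_Icc fun a ha₀ hav => by
      obtain ⟨hx₀, hxv⟩ := single_mem_Icc hv₀ ha₀ hav
      simpa [AddCommute, AddSemiconjBy] using congrFun (hr.addCommute_apply_zero hs hx₀ hxv).eq i
  obtain ⟨hr₀, hrv⟩ := hr.1 0 le_rfl hv₀
  exact ⟨r 0, boundedElt_of_mem_Icc hr₀ hrv, fun g _ => funext fun i => hc i (g i),
    isStrict_iff.1 hs⟩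

theorem twoDivisible_of_exists_half_Icc (hv : ∀ i, IsStrongUnit (v i))
    (hdiv : ∀ y : ∀ i, K i, 0 ≤ y → y ≤ v → ∃ x, 0 ≤ x ∧ x ≤ v ∧ x + x = y) {h : ∀ i, K i}
    (hc : ∀ i (a : K i), AddCommute (h i) a) (hhv : h + h = v) (i : ι) : TwoDivisible (K i) := by
  classical
  have hv₀ : 0 ≤ v := fun i => (hv i).1
  refine (hv i).twoDivisible (hc i) (congrFun hhv i) fun a ha₀ hav => ?_
  obtain ⟨hy₀, hyv⟩ := single_mem_Icc hv₀ ha₀ hav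
  obtain ⟨x, -, -, hx⟩ := hdiv _ hy₀ hyv
  exact ⟨x i, by simpa using congrFun hx i⟩

theorem twoDivisible_of_exists_half_boundedElt (hv : ∀ i, IsStrongUnit (v i))
    (hdiv : ∀ g, BoundedElt v g → ∃ h, BoundedElt v h ∧ h + h = g) (i : ι) :
    TwoDivisible (K i) := by
  classical
  intro a
  obtain ⟨b, -, hb⟩ := hdiv _ (boundedElt_single hv i a)
  exact ⟨b i, by simpa using congrFun hb i⟩

theorem exists_half_boundedElt_of_twoDivisible (hv₀ : 0 ≤ v)
    (hdiv : ∀ i, TwoDivisible (K i)) (g : ∀ i, K i) (hg : BoundedElt v g) :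
    ∃ h, BoundedElt v h ∧ h + h = g := by
  choose h hh using fun i => hdiv i (g i)
  obtain ⟨n, hn⟩ := hg
  refine ⟨h, ⟨n, fun i => ⟨add_self_le_add_self_iff.1 ?_, le_of_add_self_le ?_ ?_⟩⟩, funext hh⟩
  · rw [hh i]
    exact (add_le_of_nonpos_left (neg_nonpos.2 (nsmul_nonneg (hv₀ i) n))).trans (hn i).1
  · exact nsmul_nonneg (hv₀ i) n
  · exact (hh i).symm ▸ (hn i).2

theorem exists_half_Icc_of_twoDivisible (hdiv : ∀ i, TwoDivisible (K i)) (y : ∀ i, K i)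
    (hy₀ : 0 ≤ y) (hyv : y ≤ v) : ∃ x, 0 ≤ x ∧ x ≤ v ∧ x + x = y := by
  choose x hx using fun i => hdiv i (y i)
  refine ⟨x, fun i => add_self_nonneg_iff.1 ?_, fun i => le_of_add_self_le ?_ ?_, funext hx⟩
  · exact (hx i).symm ▸ hy₀ i
  · exact (hy₀ i).trans (hyv i)
  · exact (hx i).symm ▸ hyv i

theorem exists_isSquareRoot_of_twoDivisible (hdiv : ∀ i, TwoDivisible (K i)) {h : ∀ i, K i}
    (hc : ∀ i (a : K i), AddCommute (h i) a) (hhv : h + h = v) :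
    ∃ r : (∀ i, K i) → ∀ i, K i, IsSquareRoot v r ∧ IsStrict v r ∧
      ∀ x, 0 ≤ x → x ≤ v → r x + r x = x + v := by
  choose half hhalf using hdiv
  have hs : ∀ i a, half i (a + v i) + half i (a + v i) = a + v i := fun i a => hhalf i _
  refine ⟨fun x i => half i (x i + v i),
    IsSquareRoot.pi fun i => isSquareRoot_of_add_self_eq (hc i) (congrFun hhv i) (hs i),
    isStrict_iff.2 (funext fun i => by simpa using hs i 0), fun x _ _ => funext fun i => hs i (x i)⟩

end Pi

/-- for a direct product `M = Γ(G,u)` of linearly ordered pseudo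
MV-algebras, the following are equivalent: (i) `M` has a strict square root;
(ii) `M` is two-divisible and `u/2 ∈ C(G)`; (iii) `G` is two-divisible and
`u/2 ∈ C(G)`.  In either case `x ↦ (x+u)/2` is a strict square root on `M`. -/
theorem stmt_9 {ι : Type} (K : ι → Type)
    [∀ i, AddGroup (K i)] [∀ i, LinearOrder (K i)]
    [∀ i, CovariantClass (K i) (K i) (· + ·) (· ≤ ·)]
    [∀ i, CovariantClass (K i) (K i) (Function.swap (· + ·)) (· ≤ ·)]
    (v : ∀ i, K i) (hv : ∀ i, IsStrongUnit (v i)) :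
    ((∃ r : (∀ i, K i) → (∀ i, K i), IsSquareRoot v r ∧ IsStrict v r) ↔
      ((∀ y : ∀ i, K i, 0 ≤ y → y ≤ v → ∃ x : ∀ i, K i, 0 ≤ x ∧ x ≤ v ∧ x + x = y) ∧
       (∃ h : ∀ i, K i, BoundedElt v h ∧
          (∀ g : ∀ i, K i, BoundedElt v g → h + g = g + h) ∧ h + h = v))) ∧
    (((∀ y : ∀ i, K i, 0 ≤ y → y ≤ v → ∃ x : ∀ i, K i, 0 ≤ x ∧ x ≤ v ∧ x + x = y) ∧
       (∃ h : ∀ i, K i, BoundedElt v h ∧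
          (∀ g : ∀ i, K i, BoundedElt v g → h + g = g + h) ∧ h + h = v)) ↔
      ((∀ g : ∀ i, K i, BoundedElt v g →
          ∃ h : ∀ i, K i, BoundedElt v h ∧ h + h = g) ∧
       (∃ h : ∀ i, K i, BoundedElt v h ∧
          (∀ g : ∀ i, K i, BoundedElt v g → h + g = g + h) ∧ h + h = v))) ∧
    ((∃ r : (∀ i, K i) → (∀ i, K i), IsSquareRoot v r ∧ IsStrict v r) →
      ∃ r : (∀ i, K i) → (∀ i, K i), IsSquareRoot v r ∧ IsStrict v r ∧
        ∀ x : ∀ i, K i, 0 ≤ x → x ≤ v → r x + r x = x + v) := by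
  have hv₀ : 0 ≤ v := fun i => (hv i).1
  refine ⟨⟨fun ⟨r, hr, hs⟩ => ⟨hr.exists_half hs, exists_central_half_of_isSquareRoot hv hr hs⟩,
    ?_⟩, ⟨?_, ?_⟩, ?_⟩
  · rintro ⟨hM, h, -, hc, hhv⟩
    have hc' := addCommute_apply_of_boundedElt hv hc
    obtain ⟨r, hr, hs, -⟩ := exists_isSquareRoot_of_twoDivisible
      (twoDivisible_of_exists_half_Icc hv hM hc' hhv) hc' hhv
    exact ⟨r, hr, hs⟩
  · rintro ⟨hM, hh⟩
    refine ⟨?_, hh⟩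
    obtain ⟨h, -, hc, hhv⟩ := hh
    exact exists_half_boundedElt_of_twoDivisible hv₀
      (twoDivisible_of_exists_half_Icc hv hM (addCommute_apply_of_boundedElt hv hc) hhv)
  · rintro ⟨hG, hh⟩
    exact ⟨exists_half_Icc_of_twoDivisible (twoDivisible_of_exists_half_boundedElt hv hG), hh⟩
  · rintro ⟨r, hr, hs⟩
    obtain ⟨h, -, hc, hhv⟩ := exists_central_half_of_isSquareRoot hv hr hs
    have hc' := addCommute_apply_of_boundedElt hv hc
    exact exists_isSquareRoot_of_twoDivisible
      (twoDivisible_of_exists_half_Icc hv (hr.exists_half hs) hc' hhv) hc' hhv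
end

section
/- Let r be a square root on a representable pseudo MV-algebra M = Γ(G,u) and set w = r(0)⁻ ⊙ r(0)⁻. Then r(0) + r(0) = u − w and r(0) + r(0) = −w + u (so (u−w)/2 exists and equals r(0)), and r(0) belongs to the commutative center C(G), i.e., x + r(0) = r(0) + x for every x ∈ G. -/
/-- A bundled linearly ordered (not necessarily abelian) group with a strong unit;
`Γ((K i).carrier, (K i).u)` is then a linearly ordered pseudo MV-algebra. -/
structure LinUnitalGroup : Type 1 where
  carrier : Type
  [grp : AddGroup carrier]
  [lin : LinearOrder carrier]
  covl : ∀ a b c : carrier, b ≤ c → a + b ≤ a + c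
  covr : ∀ a b c : carrier, b ≤ c → b + a ≤ c + a
  u : carrier
  u_nonneg : 0 ≤ u
  strong : ∀ g : carrier, ∃ n : ℕ, 1 ≤ n ∧ g ≤ n • u

attribute [instance] LinUnitalGroup.grp LinUnitalGroup.lin

/-- The pseudo MV-algebra `M = Γ(G,u)` is representable: there is a family of linearly
ordered pseudo MV-algebras `Γ((K i).carrier,(K i).u)` and an injective homomorphism
(preserving `⊕`, `⁻`, `~`, `0`, `1`) of `M` into their direct product which is
surjective in each coordinate. -/
def IsRepresentable {G : Type} [Lattice G] [AddGroup G] (u : G) : Prop :=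
  ∃ (ι : Type) (K : ι → LinUnitalGroup) (f : G → ∀ i, (K i).carrier),
    (∀ x, 0 ≤ x → x ≤ u → ∀ i, 0 ≤ f x i ∧ f x i ≤ (K i).u) ∧
    (∀ i, f 0 i = 0) ∧
    (∀ i, f u i = (K i).u) ∧
    (∀ x y, 0 ≤ x → x ≤ u → 0 ≤ y → y ≤ u → ∀ i,
      f (oplus u x y) i = min (f x i + f y i) (K i).u) ∧
    (∀ x, 0 ≤ x → x ≤ u → ∀ i, f (negl u x) i = (K i).u - f x i) ∧
    (∀ x, 0 ≤ x → x ≤ u → ∀ i, f (negr u x) i = -(f x i) + (K i).u) ∧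
    (∀ x y, 0 ≤ x → x ≤ u → 0 ≤ y → y ≤ u → (∀ i, f x i = f y i) → x = y) ∧
    (∀ i, ∀ z : (K i).carrier, 0 ≤ z → z ≤ (K i).u →
      ∃ x, 0 ≤ x ∧ x ≤ u ∧ f x i = z)

/-!
Map `M` into a linearly ordered factor `Γ(K, U)` of a representation and write `b`, `c`, `z`
for the images of `r 0`, `r x`, `x`. By (Sq3) and (Sq1), `(c⁻ ⊕ b) ⊙ (c⁻ ⊕ b) = z⁻` and
`(b ⊕ c~) ⊙ (b ⊕ c~) = z~`. If `0 < z < U`, linearity rules out every truncation in these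
identities, and solving them gives `z + b = c - b + c = b + z`; for `z = U` take `x = r(0)⁻`,
whose image `U - b` then commutes with `b`. So in every factor `b` commutes with the image of
`[0, u]`. As `x + y = ((x + y - u) ⊔ 0) + (x ⊕ y)` and `(x + y - u) ⊔ 0 = x ⊙ y⁻⁻`, injectivity
makes `r 0` commute with `[0, u]`, hence, `u` being a strong unit, with all of `G`. Finally
`w = u - (r 0 + r 0)`.
-/

open Set

section LatticeOrderedGroup

variable {G : Type} [Lattice G] [AddGroup G]

lemma add_sub_sup_zero_eq_odot_negl_negl (u a b : G) :
    (a + b - u) ⊔ 0 = odot u a (negl u (negl u b)) := by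
  simp only [odot, negl, sub_eq_add_neg, neg_add_rev, neg_neg, add_assoc, neg_add_cancel_left]

variable [CovariantClass G G (· + ·) (· ≤ ·)]

lemma oplus_mem_Icc {u x y : G} (hx : x ∈ Icc 0 u) (hy : y ∈ Icc 0 u) :
    oplus u x y ∈ Icc 0 u :=
  ⟨le_inf (add_nonneg hx.1 hy.1) (hx.1.trans hx.2), inf_le_right⟩

variable [CovariantClass G G (Function.swap (· + ·)) (· ≤ ·)]

lemma negl_mem_Icc {u x : G} (hx : x ∈ Icc 0 u) : negl u x ∈ Icc 0 u :=
  ⟨sub_nonneg.2 hx.2, sub_le_self u hx.1⟩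

lemma negr_mem_Icc {u x : G} (hx : x ∈ Icc 0 u) : negr u x ∈ Icc 0 u :=
  ⟨le_neg_add_iff_le.2 hx.2, neg_add_le_iff_le_add.2 (le_add_of_nonneg_left hx.1)⟩

lemma odot_eq_negr_oplus_negl (u x y : G) :
    odot u x y = negr u (oplus u (negl u y) (negl u x)) := by
  simp only [odot, negr, oplus, negl, neg_inf, sup_add, neg_add_cancel, neg_add_rev, neg_neg,
    sub_eq_add_neg, add_assoc, add_zero]

lemma sub_sup_zero_add_inf (u a : G) : ((a - u) ⊔ 0) + (a ⊓ u) = a := by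
  have h : a ⊓ u = u - (a ⊔ u) + a := by
    rw [sub_eq_add_neg u, neg_sup, add_inf, inf_add, neg_add_cancel_right, add_neg_cancel,
      zero_add, inf_comm]
  rw [h, ← sub_self u, ← sup_sub]
  simp only [sub_eq_add_neg, add_assoc, neg_add_cancel_left, add_neg_cancel_left]

lemma add_sub_sup_zero_mem_Icc {u x y : G} (hx : x ∈ Icc 0 u) (hy : y ∈ Icc 0 u) :
    (x + y - u) ⊔ 0 ∈ Icc 0 u := by
  rw [add_sub_sup_zero_eq_odot_negl_negl, odot_eq_negr_oplus_negl]
  exact negr_mem_Icc (oplus_mem_Icc (negl_mem_Icc (negl_mem_Icc (negl_mem_Icc hy)))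
    (negl_mem_Icc hx))

lemma addCommute_of_forall_mem_Icc {u s : G} (hu : IsStrongUnit u)
    (h : ∀ x ∈ Icc 0 u, AddCommute x s) (x : G) : AddCommute x s := by
  have hnsmul : ∀ n : ℕ, ∀ g ∈ Icc 0 (n • u), AddCommute g s := by
    intro n
    induction n with
    | zero => simp
    | succ n ih =>
      rintro g ⟨hg0, hg⟩
      have hlow : g ⊓ n • u ∈ Icc 0 (n • u) := ⟨le_inf hg0 (nsmul_nonneg hu.1 n), inf_le_right⟩
      have hhigh : -(g ⊓ n • u) + g ∈ Icc 0 u := by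
        refine ⟨le_neg_add_iff_le.2 inf_le_left, ?_⟩
        rw [neg_inf, sup_add, neg_add_cancel]
        exact sup_le hu.1 (neg_add_le_iff_le_add.2 (succ_nsmul u n ▸ hg))
      simpa using (ih _ hlow).add_left (h _ hhigh)
  obtain ⟨n, -, hn⟩ := hu.2 (-x)
  obtain ⟨m, -, hm⟩ := hu.2 (n • u + x)
  have hpos : AddCommute (n • u + x) s :=
    hnsmul m _ ⟨neg_le_iff_add_nonneg.1 hn, hm⟩
  simpa using ((h u ⟨hu.1, le_rfl⟩).nsmul_left n).neg_left.add_left hpos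

end LatticeOrderedGroup

lemma eq_of_sup_zero_eq_of_pos {α : Type} [LinearOrder α] [Zero α] {a b : α} (h : a ⊔ 0 = b)
    (hb : 0 < b) : a = b := by
  rcases le_total a 0 with ha | ha
  · exact absurd (h ▸ (sup_eq_right.2 ha).symm) hb.ne
  · rwa [sup_eq_left.2 ha] at h

section LinearOrderedGroup

variable {K : Type} [LinearOrder K] [AddGroup K]
  [CovariantClass K K (· + ·) (· ≤ ·)] [CovariantClass K K (Function.swap (· + ·)) (· ≤ ·)]

lemma addCommute_of_odot_self_eq_negl_of_odot_self_eq_negr {U B C X : K} (hX0 : 0 < X)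
    (hXU : X < U)
    (hl : odot U (oplus U (negl U C) B) (oplus U (negl U C) B) = negl U X)
    (hr : odot U (oplus U B (negr U C)) (oplus U B (negr U C)) = negr U X) :
    AddCommute X B := by
  have hBC : B ≤ C := by
    -- otherwise `C⁻ ⊕ B = U`, whose square is `U ≠ X⁻`
    by_contra! hCB
    have htop : oplus U (negl U C) B = U :=
      inf_eq_right.2 (by simpa [negl, sub_eq_add_neg, add_assoc] using hCB.le)
    rw [htop] at hl
    have hU : U = U - X := by
      simpa [odot, negl, sup_eq_left.2 (hX0.trans hXU).le] using hl
    exact hX0.ne' (sub_eq_self.1 hU.symm)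
  have hl' : U - C + B - U + (U - C + B) = U - X := by
    have hle : U - C + B ≤ U := by
      simpa [sub_eq_add_neg, add_assoc] using neg_add_nonpos_iff.2 hBC
    rw [oplus, negl, inf_eq_left.2 hle] at hl
    exact eq_of_sup_zero_eq_of_pos hl (sub_pos.2 hXU)
  have hr' : B + (-C + U) - U + (B + (-C + U)) = -X + U := by
    have hle : B + (-C + U) ≤ U := by
      simpa [← add_assoc] using add_neg_nonpos_iff.2 hBC
    rw [oplus, negr, inf_eq_left.2 hle] at hr
    exact eq_of_sup_zero_eq_of_pos hr (lt_neg_add_iff_lt.2 hXU)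
  have hX₁ : -C + (B + (-C + B)) = -X := by
    simpa [sub_eq_add_neg, add_assoc] using hl'
  have hX₂ : B + (-C + (B + -C)) = -X :=
    add_right_cancel (b := U) (by simpa [sub_eq_add_neg, add_assoc] using hr')
  calc X + B = -(B + (-C + (B + -C))) + B := by rw [hX₂, neg_neg]
    _ = C + (-B + C) := by simp [neg_add_rev, add_assoc]
    _ = B + -(-C + (B + (-C + B))) := by simp [neg_add_rev, add_assoc]
    _ = B + X := by rw [hX₁, neg_neg]

end LinearOrderedGroup

/-- A homomorphism `Γ(G, u) → Γ(H, U)` of pseudo MV-algebras, given as a map of the ambient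
groups of which only the values on `[0, u]` matter. -/
structure IsGammaHom {G H : Type} [Lattice G] [AddGroup G] [Lattice H] [AddGroup H]
    (u : G) (U : H) (φ : G → H) : Prop where
  mapsTo : MapsTo φ (Icc 0 u) (Icc 0 U)
  map_oplus : ∀ x ∈ Icc 0 u, ∀ y ∈ Icc 0 u, φ (oplus u x y) = oplus U (φ x) (φ y)
  map_negl : ∀ x ∈ Icc 0 u, φ (negl u x) = negl U (φ x)
  map_negr : ∀ x ∈ Icc 0 u, φ (negr u x) = negr U (φ x)

namespace IsGammaHom

variable {G H : Type} [Lattice G] [AddGroup G]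
  [CovariantClass G G (· + ·) (· ≤ ·)] [CovariantClass G G (Function.swap (· + ·)) (· ≤ ·)]
  [Lattice H] [AddGroup H]
  [CovariantClass H H (· + ·) (· ≤ ·)] [CovariantClass H H (Function.swap (· + ·)) (· ≤ ·)]
  {u : G} {U : H} {φ : G → H}

lemma map_odot (hφ : IsGammaHom u U φ) {x y : G} (hx : x ∈ Icc 0 u) (hy : y ∈ Icc 0 u) :
    φ (odot u x y) = odot U (φ x) (φ y) := by
  rw [odot_eq_negr_oplus_negl, hφ.map_negr _ (oplus_mem_Icc (negl_mem_Icc hy) (negl_mem_Icc hx)),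
    hφ.map_oplus _ (negl_mem_Icc hy) _ (negl_mem_Icc hx), hφ.map_negl _ hy, hφ.map_negl _ hx,
    odot_eq_negr_oplus_negl]

lemma map_add_sub_sup_zero (hφ : IsGammaHom u U φ) {x y : G} (hx : x ∈ Icc 0 u)
    (hy : y ∈ Icc 0 u) : φ ((x + y - u) ⊔ 0) = (φ x + φ y - U) ⊔ 0 := by
  rw [add_sub_sup_zero_eq_odot_negl_negl, hφ.map_odot hx (negl_mem_Icc (negl_mem_Icc hy)),
    hφ.map_negl _ (negl_mem_Icc hy), hφ.map_negl _ hy, add_sub_sup_zero_eq_odot_negl_negl]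

end IsGammaHom

lemma addCommute_of_isGammaHom_apply {G : Type} [Lattice G] [AddGroup G]
    [CovariantClass G G (· + ·) (· ≤ ·)] [CovariantClass G G (Function.swap (· + ·)) (· ≤ ·)]
    {ι : Type} {H : ι → Type} [∀ i, Lattice (H i)] [∀ i, AddGroup (H i)]
    [∀ i, CovariantClass (H i) (H i) (· + ·) (· ≤ ·)]
    [∀ i, CovariantClass (H i) (H i) (Function.swap (· + ·)) (· ≤ ·)]
    {u : G} {U : ∀ i, H i} {f : G → ∀ i, H i} (hf : ∀ i, IsGammaHom u (U i) (f · i))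
    (hinj : InjOn f (Icc 0 u)) {x y : G} (hx : x ∈ Icc 0 u) (hy : y ∈ Icc 0 u)
    (h : ∀ i, AddCommute (f x i) (f y i)) : AddCommute x y := by
  have hoverflow : (x + y - u) ⊔ 0 = (y + x - u) ⊔ 0 :=
    hinj (add_sub_sup_zero_mem_Icc hx hy) (add_sub_sup_zero_mem_Icc hy hx) <| funext fun i => by
      rw [(hf i).map_add_sub_sup_zero hx hy, (hf i).map_add_sub_sup_zero hy hx, (h i).eq]
  have htrunc : oplus u x y = oplus u y x :=
    hinj (oplus_mem_Icc hx hy) (oplus_mem_Icc hy hx) <| funext fun i => by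
      rw [(hf i).map_oplus _ hx _ hy, (hf i).map_oplus _ hy _ hx, oplus, oplus, (h i).eq]
  calc x + y = ((x + y - u) ⊔ 0) + oplus u x y := (sub_sup_zero_add_inf u _).symm
    _ = ((y + x - u) ⊔ 0) + oplus u y x := by rw [hoverflow, htrunc]
    _ = y + x := sub_sup_zero_add_inf u _

instance (K : LinUnitalGroup) : CovariantClass K.carrier K.carrier (· + ·) (· ≤ ·) :=
  ⟨fun a _ _ h => K.covl a _ _ h⟩

instance (K : LinUnitalGroup) :
    CovariantClass K.carrier K.carrier (Function.swap (· + ·)) (· ≤ ·) :=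
  ⟨fun a _ _ h => K.covr a _ _ h⟩

lemma IsRepresentable.exists_isGammaHom {G : Type} [Lattice G] [AddGroup G] {u : G}
    (hrep : IsRepresentable u) :
    ∃ (ι : Type) (K : ι → LinUnitalGroup) (f : G → ∀ i, (K i).carrier),
      (∀ i, IsGammaHom u (K i).u (f · i)) ∧ InjOn f (Icc 0 u) := by
  obtain ⟨ι, K, f, hmaps, -, -, hoplus, hnegl, hnegr, hinj, -⟩ := hrep
  refine ⟨ι, K, f, fun i => ⟨fun x hx => hmaps x hx.1 hx.2 i, ?_, ?_, ?_⟩, ?_⟩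
  · exact fun x hx y hy => hoplus x y hx.1 hx.2 hy.1 hy.2 i
  · exact fun x hx => hnegl x hx.1 hx.2 i
  · exact fun x hx => hnegr x hx.1 hx.2 i
  · exact fun x hx y hy hxy => hinj x y hx.1 hx.2 hy.1 hy.2 (congrFun hxy)

namespace IsSquareRoot

section Basic

variable {G : Type} [Lattice G] [AddGroup G] {u : G} {r : G → G}

lemma mem_Icc (hr : IsSquareRoot u r) {x : G} (hx : x ∈ Icc 0 u) : r x ∈ Icc 0 u :=
  hr.1 x hx.1 hx.2

lemma odot_self (hr : IsSquareRoot u r) {x : G} (hx : x ∈ Icc 0 u) : odot u (r x) (r x) = x :=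
  hr.2.1 x hx.1 hx.2

lemma apply_negl (hr : IsSquareRoot u r) {x : G} (hx : x ∈ Icc 0 u) :
    r (negl u x) = oplus u (negl u (r x)) (r 0) :=
  hr.2.2.2.1 x hx.1 hx.2

lemma apply_negr (hr : IsSquareRoot u r) {x : G} (hx : x ∈ Icc 0 u) :
    r (negr u x) = oplus u (r 0) (negr u (r x)) :=
  hr.2.2.2.2 x hx.1 hx.2

end Basic

variable {G : Type} [Lattice G] [AddGroup G]
  [CovariantClass G G (· + ·) (· ≤ ·)] [CovariantClass G G (Function.swap (· + ·)) (· ≤ ·)]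
  {K : Type} [LinearOrder K] [AddGroup K]
  [CovariantClass K K (· + ·) (· ≤ ·)] [CovariantClass K K (Function.swap (· + ·)) (· ≤ ·)]
  {u : G} {r : G → G} {U : K} {φ : G → K}

lemma addCommute_apply_zero_of_pos_of_lt (hr : IsSquareRoot u r) (hφ : IsGammaHom u U φ) {x : G}
    (hx : x ∈ Icc 0 u) (hx0 : 0 < φ x) (hxU : φ x < U) : AddCommute (φ x) (φ (r 0)) := by
  have hs := hr.mem_Icc ⟨le_rfl, hx.1.trans hx.2⟩
  have hrx := hr.mem_Icc hx
  refine addCommute_of_odot_self_eq_negl_of_odot_self_eq_negr (C := φ (r x)) hx0 hxU ?_ ?_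
  · have hrnx := hr.mem_Icc (negl_mem_Icc hx)
    rw [← hφ.map_negl _ hx, ← hr.odot_self (negl_mem_Icc hx), hφ.map_odot hrnx hrnx,
      hr.apply_negl hx, hφ.map_oplus _ (negl_mem_Icc hrx) _ hs, hφ.map_negl _ hrx]
  · have hrnx := hr.mem_Icc (negr_mem_Icc hx)
    rw [← hφ.map_negr _ hx, ← hr.odot_self (negr_mem_Icc hx), hφ.map_odot hrnx hrnx,
      hr.apply_negr hx, hφ.map_oplus _ hs _ (negr_mem_Icc hrx), hφ.map_negr _ hrx]

lemma addCommute_top_apply_zero (hr : IsSquareRoot u r) (hu : 0 ≤ u) (hφ : IsGammaHom u U φ) :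
    AddCommute U (φ (r 0)) := by
  have hs := hr.mem_Icc ⟨le_rfl, hu⟩
  obtain ⟨hB0, hBU⟩ := hφ.mapsTo hs
  rcases hB0.eq_or_lt with hB0 | hB0
  · exact hB0 ▸ AddCommute.zero_right U
  rcases hBU.eq_or_lt with hBU | hBU
  · exact hBU ▸ AddCommute.refl _
  have h := hr.addCommute_apply_zero_of_pos_of_lt hφ (negl_mem_Icc hs)
    (hφ.map_negl _ hs ▸ sub_pos.2 hBU) (hφ.map_negl _ hs ▸ sub_lt_self U hB0)
  rw [hφ.map_negl _ hs] at h
  simpa [negl] using h.add_left (AddCommute.refl _)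

lemma addCommute_apply_zero_s11 (hr : IsSquareRoot u r) (hφ : IsGammaHom u U φ) {x : G}
    (hx : x ∈ Icc 0 u) : AddCommute (φ x) (φ (r 0)) := by
  obtain ⟨hx0, hxU⟩ := hφ.mapsTo hx
  rcases hx0.eq_or_lt with hx0 | hx0
  · exact hx0 ▸ AddCommute.zero_left _
  rcases hxU.eq_or_lt with hxU | hxU
  · exact hxU ▸ hr.addCommute_top_apply_zero (hx.1.trans hx.2) hφ
  exact hr.addCommute_apply_zero_of_pos_of_lt hφ hx hx0 hxU

end IsSquareRoot

/-- for a square root `r` on a representable pseudo MV-algebra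
`M = Γ(G,u)` and `w = r(0)⁻ ⊙ r(0)⁻` one has `r(0) + r(0) = u - w = -w + u`
and `r(0)` lies in the commutative center of `G`. -/
theorem stmt_11 {G : Type} [Lattice G] [AddGroup G]
    [CovariantClass G G (· + ·) (· ≤ ·)]
    [CovariantClass G G (Function.swap (· + ·)) (· ≤ ·)]
    (u : G) (hu : IsStrongUnit u) (hrep : IsRepresentable u)
    (r : G → G) (hr : IsSquareRoot u r)
    (w : G) (hw : w = odot u (negl u (r 0)) (negl u (r 0))) :
    r 0 + r 0 = u - w ∧ r 0 + r 0 = -w + u ∧ ∀ x : G, x + r 0 = r 0 + x := by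
  obtain ⟨ι, K, f, hf, hinj⟩ := hrep.exists_isGammaHom
  have hs : r 0 ∈ Icc 0 u := hr.mem_Icc ⟨le_rfl, hu.1⟩
  have hcentral : ∀ x, AddCommute x (r 0) :=
    addCommute_of_forall_mem_Icc hu fun x hx =>
      addCommute_of_isGammaHom_apply hf hinj hx hs fun i => hr.addCommute_apply_zero_s11 (hf i) hx
  have hss : r 0 + r 0 ≤ u := by
    have h : (r 0 - u + r 0) ⊔ 0 = 0 := hr.odot_self ⟨le_rfl, hu.1⟩
    rwa [sup_eq_right, sub_eq_add_neg, add_assoc, (hcentral u).neg_left.eq, ← add_assoc,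
      ← sub_eq_add_neg, sub_nonpos] at h
  have hw' : w = u - (r 0 + r 0) := by
    rw [hw, odot, negl, show u - r 0 - u + (u - r 0) = u - (r 0 + r 0) by
      simp [sub_eq_add_neg, add_assoc], sup_eq_left.2 (sub_nonneg.2 hss)]
  refine ⟨?_, ?_, fun x => (hcentral x).eq⟩
  · rw [eq_sub_iff_add_eq, hw', ← add_sub_assoc, ((hcentral u).add_right (hcentral u)).symm.eq,
      add_sub_cancel_right]
  · rw [hw', neg_sub, sub_add_cancel]
end
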